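/- arXiv:2205.15146 — 2 statements merged into one kernel-verified Lean document; each statement's English description precedes it below -/
import Mathlib

section
/- Let n ≥ 2 and let x ∈ ℝⁿ be non-constant. Then the standardization map y is Fréchet differentiable at x, and its Jacobian matrix J(x) = ∂y(x)ᵀ/∂x satisfies J(x) = (1/σ(x)) · ( Iₙ − (1/n)·1ₙ1ₙᵀ − (1/(n·σ(x)²))·(x − μ(x)1ₙ)(x − μ(x)1ₙ)ᵀ ). -/
open scoped BigOperators

/-- Mini-batch mean of a feature dimension across `n` samples. -/
noncomputable def bmean {n : ℕ} (x : Fin n → ℝ) : ℝ := (∑ i, x i) / n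

/-- Mini-batch standard deviation of a feature dimension across `n` samples. -/
noncomputable def bstd {n : ℕ} (x : Fin n → ℝ) : ℝ :=
  Real.sqrt ((∑ i, (x i - bmean x) ^ 2) / n)

/-- `x` is non-constant: it differs from the constant vector of its mean. -/
def NonConstant {n : ℕ} (x : Fin n → ℝ) : Prop := x ≠ fun _ => bmean x

/-- The batch-normalization standardization phase (with ε = 0). -/
noncomputable def standardize {n : ℕ} (x : Fin n → ℝ) : Fin n → ℝ :=
  fun i => (x i - bmean x) / bstd x

/-- The claimed Jacobian matrix of the standardization map. -/
noncomputable def bnJacobian {n : ℕ} (x : Fin n → ℝ) : Matrix (Fin n) (Fin n) ℝ :=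
  fun i j => (1 / bstd x) *
    ((if i = j then (1 : ℝ) else 0) - 1 / (n : ℝ)
      - (x i - bmean x) * (x j - bmean x) / ((n : ℝ) * bstd x ^ 2))

/-! The standardization is `y ↦ σ(y)⁻¹ • (y - μ(y) 1)`, a scalar function times a linear map.
Because the deviations `xᵢ - μ(x)` sum to zero, the differential of the variance `σ²` at `x` is
`h ↦ (2/n) Σᵢ (xᵢ - μ(x)) hᵢ` (the mean of `h` drops out), hence that of `σ⁻¹` is
`h ↦ -(n σ³)⁻¹ Σᵢ (xᵢ - μ(x)) hᵢ`, and the product rule gives the stated Jacobian. -/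

open ContinuousLinearMap

section
variable {n : ℕ}

noncomputable def bmeanCLM (n : ℕ) : (Fin n → ℝ) →L[ℝ] ℝ := (n : ℝ)⁻¹ • ∑ i, proj i

@[simp]
theorem bmeanCLM_apply (y : Fin n → ℝ) : bmeanCLM n y = bmean y := by
  simp [bmeanCLM, bmean, div_eq_inv_mul]

noncomputable def centerCLM (n : ℕ) : (Fin n → ℝ) →L[ℝ] Fin n → ℝ :=
  ContinuousLinearMap.id ℝ _ - (bmeanCLM n).smulRight 1

@[simp]
theorem centerCLM_apply (y : Fin n → ℝ) (i : Fin n) : centerCLM n y i = y i - bmean y := by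
  simp [centerCLM]

theorem sum_sub_bmean (x : Fin n → ℝ) : ∑ i, (x i - bmean x) = 0 := by
  rcases Nat.eq_zero_or_pos n with rfl | hn
  · simp
  · rw [Finset.sum_sub_distrib, Finset.sum_const, Finset.card_univ, Fintype.card_fin, nsmul_eq_mul,
      bmean, mul_div_cancel₀ _ (by positivity), sub_self]

theorem sum_sub_bmean_mul_sub_bmean (x h : Fin n → ℝ) :
    ∑ i, (x i - bmean x) * (h i - bmean h) = ∑ i, (x i - bmean x) * h i := by
  simp_rw [mul_sub]
  rw [Finset.sum_sub_distrib, ← Finset.sum_mul, sum_sub_bmean, zero_mul, sub_zero]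

noncomputable def bvar (y : Fin n → ℝ) : ℝ := (∑ i, (y i - bmean y) ^ 2) / n

theorem bstd_eq_sqrt_bvar (y : Fin n → ℝ) : bstd y = √(bvar y) := rfl

theorem bvar_pos {x : Fin n → ℝ} (hx : NonConstant x) : 0 < bvar x := by
  obtain ⟨i, hi⟩ : ∃ i, x i ≠ bmean x := by
    by_contra! h
    exact hx (funext h)
  have : (0 : ℝ) < n := by exact_mod_cast i.pos
  refine div_pos (Finset.sum_pos' (fun j _ => sq_nonneg _) ⟨i, Finset.mem_univ i, ?_⟩) this
  have := sub_ne_zero.mpr hi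
  positivity

theorem hasFDerivAt_bvar (x : Fin n → ℝ) :
    HasFDerivAt bvar ((2 / n : ℝ) • ∑ i, (x i - bmean x) • (proj i : (Fin n → ℝ) →L[ℝ] ℝ)) x := by
  have hsq : ∀ i, HasFDerivAt (fun y : Fin n → ℝ => (y i - bmean y) ^ 2)
      ((2 * (x i - bmean x)) • (proj i ∘L centerCLM n)) x := by
    intro i
    simpa using ((proj i ∘L centerCLM n).hasFDerivAt (x := x)).pow 2
  have key := (HasFDerivAt.fun_sum (u := Finset.univ) fun i _ => hsq i).mul_const (n : ℝ)⁻¹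
  simp only [← div_eq_mul_inv] at key
  refine key.congr_fderiv ?_
  ext h
  simp only [smul_apply, sum_apply, coe_comp, Function.comp_apply, proj_apply, centerCLM_apply,
    smul_eq_mul]
  simp_rw [mul_assoc, ← Finset.mul_sum, sum_sub_bmean_mul_sub_bmean]
  ring

theorem bnJacobian_mulVec (x h : Fin n → ℝ) (i : Fin n) :
    (bnJacobian x).mulVec h i = (bstd x)⁻¹ * (h i - bmean h
      - (x i - bmean x) * (∑ j, (x j - bmean x) * h j) / (n * bstd x ^ 2)) := by
  have hterm : ∀ j, bnJacobian x i j * h j = (bstd x)⁻¹ * ((if i = j then h j else 0) - h j / n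
      - (x i - bmean x) / (n * bstd x ^ 2) * ((x j - bmean x) * h j)) := by
    intro j
    simp only [bnJacobian]
    split_ifs <;> ring
  simp only [Matrix.mulVec, dotProduct, hterm, ← Finset.mul_sum, Finset.sum_sub_distrib,
    Finset.sum_ite_eq, Finset.mem_univ, if_true, ← Finset.sum_div, bmean]
  ring

theorem hasFDerivAt_inv_bstd {x : Fin n → ℝ} (hx : NonConstant x) :
    HasFDerivAt (fun y => (bstd y)⁻¹)
      (-(n * bstd x ^ 3)⁻¹ • ∑ i, (x i - bmean x) • (proj i : (Fin n → ℝ) →L[ℝ] ℝ)) x := by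
  have hvar := bvar_pos hx
  have hstd : HasFDerivAt bstd _ x := (hasFDerivAt_bvar x).sqrt hvar.ne'
  have hσ : 0 < bstd x := Real.sqrt_pos.mpr hvar
  refine ((hasDerivAt_inv hσ.ne').comp_hasFDerivAt x hstd).congr_fderiv ?_
  ext h
  simp only [← bstd_eq_sqrt_bvar, one_div, neg_smul, neg_apply, smul_apply, sum_apply, proj_apply,
    smul_eq_mul, neg_mul, neg_inj]
  ring

theorem standardize_eq_smul :
    standardize (n := n) = fun y => (bstd y)⁻¹ • centerCLM n y := by
  ext y i
  simp [standardize, div_eq_inv_mul]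

end

theorem bn_jacobian_formula_general (n : ℕ) (x : Fin n → ℝ) (hx : NonConstant x) :
    HasFDerivAt (standardize (n := n))
      (LinearMap.toContinuousLinearMap (Matrix.toLin' (bnJacobian x))) x := by
  rw [standardize_eq_smul]
  refine ((hasFDerivAt_inv_bstd hx).smul (centerCLM n).hasFDerivAt).congr_fderiv ?_
  ext h i
  simp only [LinearMap.coe_toContinuousLinearMap', Matrix.toLin'_apply, bnJacobian_mulVec,
    add_apply, smul_apply, smulRight_apply, sum_apply, proj_apply, smul_eq_mul, Pi.add_apply,
    Pi.smul_apply, centerCLM_apply]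
  ring

/-- for `n ≥ 2` and non-constant `x`, the standardization map is Fréchet
differentiable at `x` and its Jacobian is
`(1/σ(x)) (I − (1/n) 1 1ᵀ − (1/(n σ(x)²)) (x − μ(x)1)(x − μ(x)1)ᵀ)`. -/
theorem bn_jacobian_formula (n : ℕ) (hn : 2 ≤ n) (x : Fin n → ℝ) (hx : NonConstant x) :
    HasFDerivAt (standardize (n := n))
      (LinearMap.toContinuousLinearMap (Matrix.toLin' (bnJacobian x))) x :=
  bn_jacobian_formula_general n x hx
end

section
/- (Theorem 3, linear part) Let n ≥ 2, let x ∈ ℝⁿ be non-constant, let J(x) be the Jacobian of the standardization map y at x, and let o = y(x)/‖y(x)‖. Then for every scalar c ∈ ℝ, J(x)·(c·o) = 0. In particular, for any fixed vectors y_1,…,y_D ∈ ℝⁿ and coefficients h ∈ ℝ^D, the back-propagated gradient J(x)·((Σ_{j=1}^D h_j ⟨o, y_j⟩)·o) of the linearly-correlated interaction term through the standardization phase vanishes. -/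
open scoped BigOperators

/-!
Standardization is invariant under positive affine maps `xᵢ ↦ a xᵢ + b`, `a > 0`. The points
`x + t (x - μ(x) 1) = (1 + t) x - t μ(x) 1` with `t > -1` are such images of `x`, so `y` is
constant along this line through `x`, and `J(x)` kills its direction, which is parallel to
`y(x)` and hence to `o`.
-/

open Filter Topology

theorem fderiv_apply_eq_zero_of_eventually_eq_on_line {𝕜 E F : Type*} [NontriviallyNormedField 𝕜]
    [NormedAddCommGroup E] [NormedSpace 𝕜 E] [NormedAddCommGroup F] [NormedSpace 𝕜 F]
    {f : E → F} {x v : E} (h : ∀ᶠ t in 𝓝 (0 : 𝕜), f (x + t • v) = f x) :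
    fderiv 𝕜 f x v = 0 := by
  by_cases hf : DifferentiableAt 𝕜 f x
  · have hconst : HasLineDerivAt 𝕜 f 0 x v :=
      (hasDerivAt_const (0 : 𝕜) (f x)).congr_of_eventuallyEq h
    exact (hf.hasFDerivAt.hasLineDerivAt v).unique hconst
  · rw [fderiv_zero_of_not_differentiableAt hf]
    rfl

section Standardize

variable {n : ℕ}

theorem affine_sub_bmean (x : Fin n → ℝ) (a b : ℝ) (i : Fin n) :
    a * x i + b - bmean (fun j => a * x j + b) = a * (x i - bmean x) := by
  have hn : (n : ℝ) ≠ 0 := by exact_mod_cast i.pos.ne'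
  simp only [bmean, Finset.sum_add_distrib, ← Finset.mul_sum, Finset.sum_const,
    Finset.card_univ, Fintype.card_fin, nsmul_eq_mul]
  field_simp
  ring

theorem bstd_affine (x : Fin n → ℝ) {a : ℝ} (ha : 0 ≤ a) (b : ℝ) :
    bstd (fun j => a * x j + b) = a * bstd x := by
  simp only [bstd, affine_sub_bmean, mul_pow, ← Finset.mul_sum, mul_div_assoc]
  rw [Real.sqrt_mul (sq_nonneg a), Real.sqrt_sq ha]

theorem standardize_affine (x : Fin n → ℝ) {a : ℝ} (ha : 0 < a) (b : ℝ) :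
    standardize (fun j => a * x j + b) = standardize x := by
  funext i
  simp only [standardize, affine_sub_bmean, bstd_affine x ha.le]
  exact mul_div_mul_left _ _ ha.ne'

theorem fderiv_standardize_apply_sub_bmean (x : Fin n → ℝ) :
    fderiv ℝ standardize x (fun i => x i - bmean x) = 0 := by
  refine fderiv_apply_eq_zero_of_eventually_eq_on_line ?_
  filter_upwards [eventually_gt_nhds (show (-1 : ℝ) < 0 by norm_num)] with t ht
  have hline : x + t • (fun i => x i - bmean x) = fun j => (1 + t) * x j + -(t * bmean x) := by
    funext j
    simp only [Pi.add_apply, Pi.smul_apply, smul_eq_mul]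
    ring
  rw [hline, standardize_affine x (by linarith)]

theorem fderiv_standardize_apply_self (x : Fin n → ℝ) :
    fderiv ℝ standardize x (standardize x) = 0 := by
  have hscale : standardize x = (bstd x)⁻¹ • fun i => x i - bmean x := by
    funext i
    simp only [standardize, Pi.smul_apply, smul_eq_mul]
    ring
  rw [hscale, map_smul, fderiv_standardize_apply_sub_bmean, smul_zero]

end Standardize

theorem bn_jacobian_kills_linear_component_general (n : ℕ)
    (x : Fin n → ℝ) :
    let nrm : ℝ := Real.sqrt (∑ i, standardize x i ^ 2)
    let o : Fin n → ℝ := nrm⁻¹ • standardize x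
    (∀ c : ℝ, fderiv ℝ (standardize (n := n)) x (c • o) = 0) ∧
    ∀ (D : ℕ) (ys : Fin D → Fin n → ℝ) (h : Fin D → ℝ),
      fderiv ℝ (standardize (n := n)) x
        ((∑ j, h j * ∑ i, o i * ys j i) • o) = 0 := by
  intro nrm o
  have hkill : ∀ c : ℝ, fderiv ℝ standardize x (c • o) = 0 := fun c => by
    simp only [o, map_smul, fderiv_standardize_apply_self, smul_zero]
  exact ⟨hkill, fun D ys h => hkill _⟩

/-- Theorem 3, linear part: with `o = y(x)/‖y(x)‖` (Euclidean norm),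
every multiple of `o` is annihilated by the Jacobian of standardization at `x`;
in particular the back-propagated gradient of the linearly-correlated interaction
term `(Σⱼ hⱼ⟨o, yⱼ⟩)·o` through the standardization phase vanishes. -/
theorem bn_jacobian_kills_linear_component (n : ℕ) (hn : 2 ≤ n)
    (x : Fin n → ℝ) (hx : NonConstant x) :
    let nrm : ℝ := Real.sqrt (∑ i, standardize x i ^ 2)
    let o : Fin n → ℝ := nrm⁻¹ • standardize x
    (∀ c : ℝ, fderiv ℝ (standardize (n := n)) x (c • o) = 0) ∧
    ∀ (D : ℕ) (ys : Fin D → Fin n → ℝ) (h : Fin D → ℝ),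
      fderiv ℝ (standardize (n := n)) x
        ((∑ j, h j * ∑ i, o i * ys j i) • o) = 0 :=
  bn_jacobian_kills_linear_component_general n x
end
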